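/- Let G be a connected bipartite multigraph embedded on an orientable surface of genus g, with bipartition classes V_1 and V_2 where |V_1| = 1 and every vertex of V_2 has degree at least 2. Fix k ≥ 2 and let i be the number of faces of size less than 2k. Then i ≥ k/(k-1) - (2k/(k-1))·g + ((k-2)/(k-1))·|V_2|. -/

import Mathlib

/-- A connected oriented combinatorial embedding of a (multi)graph, given by a
finite set of darts (directed edges), a rotation permutation `σ` (next dart in
the cyclic order around the tail vertex) and a fixed-point-free involution `α`
(dart reversal). -/
structure EmbGraph where
  D : Type
  finD : Finite D
  σ : Equiv.Perm D
  α : Equiv.Perm D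
  α_invol : ∀ d, α (α d) = d
  α_ne : ∀ d, α d ≠ d

namespace EmbGraph

variable (G : EmbGraph)

instance : Finite G.D := G.finD

/-- The setoid identifying darts in a common cycle of a permutation. -/
def sameCycleSetoid (f : Equiv.Perm G.D) : Setoid G.D :=
  ⟨f.SameCycle, ⟨fun _ => Equiv.Perm.SameCycle.refl f _, fun h => h.symm, fun h h' => h.trans h'⟩⟩

/-- The face permutation: the successor of the directed edge `(u,v)` in its
facial walk is the next edge after `(v,u)` in the rotation around `v`. -/
def facePerm : Equiv.Perm G.D := G.σ * G.α

/-- Vertices are the orbits of `σ`. -/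
def Vert := Quotient (G.sameCycleSetoid G.σ)
/-- Edges are the orbits of `α`. -/
def Edge := Quotient (G.sameCycleSetoid G.α)
/-- Faces are the orbits of the face permutation. -/
def Face := Quotient (G.sameCycleSetoid G.facePerm)

/-- The tail vertex of a dart. -/
def vtx (d : G.D) : G.Vert := Quotient.mk (G.sameCycleSetoid G.σ) d
def edgeOf (d : G.D) : G.Edge := Quotient.mk (G.sameCycleSetoid G.α) d
def faceOf (d : G.D) : G.Face := Quotient.mk (G.sameCycleSetoid G.facePerm) d

instance : Finite G.Vert := Quotient.finite _
instance : Finite G.Edge := Quotient.finite _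
instance : Finite G.Face := Quotient.finite _

noncomputable def numVertices : ℕ := Nat.card G.Vert
noncomputable def numEdges : ℕ := Nat.card G.Edge
noncomputable def numFaces : ℕ := Nat.card G.Face

/-- The Euler characteristic `v - e + f`; the genus `g` of the embedding is
defined by `v - e + f = 2 - 2g`. -/
noncomputable def eulerChar : ℤ := (G.numVertices : ℤ) - (G.numEdges : ℤ) + (G.numFaces : ℤ)

/-- The embedded graph is connected. -/
def Connected : Prop :=
  ∀ a b : G.D, Relation.EqvGen (fun x y => y = G.σ x ∨ y = G.α x) a b

/-- The degree of a vertex: the number of darts with this tail. -/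
noncomputable def degree (v : G.Vert) : ℕ := Nat.card {d : G.D // G.vtx d = v}

/-- The size of a face: the number of darts in its facial walk. -/
noncomputable def faceSize (f : G.Face) : ℕ := Nat.card {d : G.D // G.faceOf d = f}

/-- The underlying simple graph of the embedded graph. -/
def underlying : SimpleGraph G.Vert where
  Adj u v := u ≠ v ∧ ∃ d, G.vtx d = u ∧ G.vtx (G.α d) = v
  symm := ⟨by
    rintro u v ⟨huv, d, hd1, hd2⟩
    exact ⟨huv.symm, G.α d, hd2, by rw [G.α_invol]; exact hd1⟩⟩
  loopless := ⟨fun v h => h.1 rfl⟩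

/-- The embedded graph is a simple graph: no loops and no multiple edges. -/
def IsSimple : Prop :=
  (∀ d, G.vtx d ≠ G.vtx (G.α d)) ∧
    ∀ d d', G.vtx d = G.vtx d' → G.vtx (G.α d) = G.vtx (G.α d') → G.edgeOf d = G.edgeOf d'

/-- The dual graph: vertices are the faces of `G`, two faces being adjacent
if they share an edge. -/
def dualGraph : SimpleGraph G.Face where
  Adj f f' := f ≠ f' ∧ ∃ d, G.faceOf d = f ∧ G.faceOf (G.α d) = f'
  symm := ⟨by
    rintro f f' ⟨hff, d, hd1, hd2⟩
    exact ⟨hff.symm, G.α d, hd2, by rw [G.α_invol]; exact hd1⟩⟩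
  loopless := ⟨fun f h => h.1 rfl⟩

/-- The dual (multi)graph is simple: no face shares an edge with itself, and no
two faces share more than one edge. -/
def DualSimple : Prop :=
  (∀ d, G.faceOf d ≠ G.faceOf (G.α d)) ∧
    ∀ d d', G.faceOf d = G.faceOf d' → G.faceOf (G.α d) = G.faceOf (G.α d') →
      G.edgeOf d = G.edgeOf d'

/-- The dual embedded graph. -/
def dualMap : EmbGraph :=
  ⟨G.D, G.finD, G.σ * G.α, G.α, G.α_invol, G.α_ne⟩

/-- Identifying the angle following dart `a` with the angle following dart `b`:
the rotation is composed with the transposition of `a` and `b`. -/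
noncomputable def identifyAngles (a b : G.D) : EmbGraph :=
  letI : DecidableEq G.D := Classical.decEq _
  ⟨G.D, G.finD, G.σ * Equiv.swap a b, G.α, G.α_invol, G.α_ne⟩

/-- The H-operation applied to the edge given by the dart `d = (x,y)`, where
`x` and `y` have degree `3`.  With rotations `y,w',v` around `x` and `x,w,v'`
around `y`, it identifies the angle of `v` preceding `x` with the angle of `v'`
preceding `y`, and the angle of `w` following `y` with the angle of `w'`
following `x`, merging `v` with `v'` and `w` with `w'`. -/
noncomputable def Hop (d : G.D) : EmbGraph :=
  (G.identifyAngles (G.σ⁻¹ (G.α (G.σ (G.σ d)))) (G.σ⁻¹ (G.α (G.σ (G.σ (G.α d)))))).identifyAngles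
    (G.α (G.σ (G.α d))) (G.α (G.σ d))

end EmbGraph

/-- `S` is a vertex cut-set of `H`: deleting `S` leaves two vertices with no
path between them. -/
def IsCutSet {W : Type*} (H : SimpleGraph W) (S : Set W) : Prop :=
  ∃ a b : ↥(Sᶜ), ¬ (H.induce Sᶜ).Reachable a b

/-- `H` is `n`-connected: it has more than `n` vertices and no cut-set with
fewer than `n` vertices. -/
def KConnected {W : Type*} (n : ℕ) (H : SimpleGraph W) : Prop :=
  n < Nat.card W ∧ ∀ S : Set W, S.ncard < n → ¬ IsCutSet H S

/-- The set of genera `s` for which a simple `c`-connected embedded graph of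
genus `s` with a simple dual having a vertex cut of size `k` exists. -/
def deltaSet (k c : ℕ) : Set ℕ :=
  {s | ∃ G : EmbGraph, G.Connected ∧ G.IsSimple ∧ KConnected c G.underlying ∧
      G.eulerChar = 2 - 2 * (s : ℤ) ∧ G.DualSimple ∧
      ∃ S : Set G.Face, S.ncard = k ∧ IsCutSet G.dualGraph S}

/-- `δ_k(c)`: the minimum genus of a simple `c`-connected embedded graph whose
simple dual has a vertex cut of size `k`. -/
noncomputable def delta (k c : ℕ) : ℕ := sInf (deltaSet k c)

/-!
Every edge joins the single vertex `v₀` of `V₁` to `V₂`, so no edge is a loop and every face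
has size at least `2`. Counting darts face by face, a face of size `≥ 2k` contributes at
least `2k` and a small one at least `2`, whence `k·f ≤ e + (k - 1)·i`. Counting the darts
with tail in `V₂` gives `e ≥ 2|V₂|`. Eliminating `f` with Euler's formula and then `e`
with this bound yields `(k - 1)·i ≥ k - 2kg + (k - 2)·|V₂|`.
-/

theorem card_eq_sum_card_fiber {α β : Type*} [Finite α] [Fintype β] (φ : α → β) :
    Nat.card α = ∑ b, Nat.card {a // φ a = b} := by
  rw [← Nat.card_congr (Equiv.sigmaFiberEquiv φ), Nat.card_sigma]

theorem card_subtype_add_card_subtype_not {α : Type*} [Finite α] (p : α → Prop) :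
    Nat.card {a // p a} + Nat.card {a // ¬ p a} = Nat.card α := by
  classical
  rw [← Nat.card_sum, Nat.card_congr (Equiv.sumCompl p)]

namespace EmbGraph

variable (G : EmbGraph)

@[simp]
theorem vtx_σ (d : G.D) : G.vtx (G.σ d) = G.vtx d :=
  Quotient.sound ⟨-1, by simp⟩

@[simp]
theorem faceOf_facePerm (d : G.D) : G.faceOf (G.facePerm d) = G.faceOf d :=
  Quotient.sound ⟨-1, by simp⟩

theorem edgeOf_eq_edgeOf_iff {x d : G.D} : G.edgeOf x = G.edgeOf d ↔ x = d ∨ x = G.α d := by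
  have hinv : Function.Involutive G.α := G.α_invol
  constructor
  · intro h
    obtain ⟨n, hn⟩ := (Quotient.exact h : G.α.SameCycle x d).exists_nat_pow_eq
    rw [Equiv.Perm.coe_pow] at hn
    rcases n.even_or_odd with heven | hodd
    · rw [hinv.iterate_even heven] at hn
      exact Or.inl hn
    · rw [hinv.iterate_odd hodd] at hn
      exact Or.inr (hn ▸ (G.α_invol x).symm)
  · rintro (rfl | rfl)
    · rfl
    · exact Quotient.sound (Equiv.Perm.sameCycle_apply_left.mpr (Equiv.Perm.SameCycle.refl _ _))

theorem card_darts_of_edge (E : G.Edge) : Nat.card {x // G.edgeOf x = E} = 2 := by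
  obtain ⟨d, rfl⟩ := Quotient.exists_rep E
  have hfiber : {x | G.edgeOf x = G.edgeOf d} = {d, G.α d} := by
    ext x
    exact G.edgeOf_eq_edgeOf_iff
  rw [← Set.ncard_pair (G.α_ne d).symm, ← hfiber, ← Nat.card_coe_set_eq]
  rfl

theorem card_darts : Nat.card G.D = 2 * G.numEdges := by
  have := Fintype.ofFinite G.Edge
  rw [card_eq_sum_card_fiber G.edgeOf, Finset.sum_congr rfl fun E _ => G.card_darts_of_edge E,
    Finset.sum_const, Finset.card_univ, smul_eq_mul, numEdges, Nat.card_eq_fintype_card,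
    mul_comm]

theorem sum_degree [Fintype G.Vert] : ∑ u, G.degree u = 2 * G.numEdges := by
  rw [← G.card_darts, card_eq_sum_card_fiber G.vtx]
  rfl

theorem sum_faceSize [Fintype G.Face] : ∑ f, G.faceSize f = 2 * G.numEdges := by
  rw [← G.card_darts, card_eq_sum_card_fiber G.faceOf]
  rfl

theorem two_le_faceSize (hloop : ∀ d, G.vtx (G.α d) ≠ G.vtx d) (f : G.Face) :
    2 ≤ G.faceSize f := by
  obtain ⟨d, rfl⟩ := Quotient.exists_rep f
  have hne : G.facePerm d ≠ d := fun h =>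
    hloop d (by rw [← G.vtx_σ (G.α d)]; exact congrArg G.vtx h)
  have : Nontrivial {x // G.faceOf x = G.faceOf d} :=
    nontrivial_of_ne ⟨G.facePerm d, G.faceOf_facePerm d⟩ ⟨d, rfl⟩ (by simpa using hne)
  exact Finite.one_lt_card_iff_nontrivial.mpr this

theorem mul_numFaces_le (hface : ∀ f, 2 ≤ G.faceSize f) (k : ℕ) :
    k * G.numFaces ≤ G.numEdges + (k - 1) * Nat.card {f // G.faceSize f < 2 * k} := by
  classical
  have := Fintype.ofFinite G.Face
  have hpoint : ∀ f,
      2 * k ≤ G.faceSize f + 2 * (k - 1) * if G.faceSize f < 2 * k then 1 else 0 := by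
    intro f
    have := hface f
    split_ifs <;> omega
  have hsum := Finset.sum_le_sum fun f (_ : f ∈ Finset.univ) => hpoint f
  rw [Finset.sum_const, Finset.sum_add_distrib, ← Finset.mul_sum, Finset.sum_boole,
    G.sum_faceSize, ← Fintype.card_subtype, ← Nat.card_eq_fintype_card, Finset.card_univ,
    ← Nat.card_eq_fintype_card, smul_eq_mul] at hsum
  rw [numFaces]
  linarith

section StarBipartite

variable {G} {v0 : G.Vert} (hbip : ∀ d : G.D, G.vtx d = v0 ↔ G.vtx (G.α d) ≠ v0)
include hbip

theorem vtx_α_ne_vtx (d : G.D) : G.vtx (G.α d) ≠ G.vtx d := by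
  by_cases hd : G.vtx d = v0
  · exact hd ▸ (hbip d).mp hd
  · exact fun h => hd ((hbip d).mpr (h ▸ hd))

/-- `α` swaps the darts at `v0` with the other darts, so each kind makes up half of all `2e`. -/
theorem degree_eq_numEdges : G.degree v0 = G.numEdges := by
  have hswap : G.degree v0 = Nat.card {d // ¬ G.vtx d = v0} :=
    Nat.card_congr (G.α.subtypeEquiv hbip)
  have := card_subtype_add_card_subtype_not fun d => G.vtx d = v0
  rw [← hswap, G.card_darts] at this
  exact Nat.eq_of_mul_eq_mul_left two_pos (by rw [← this, degree]; ring)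

theorem two_mul_card_vert_le (hdeg : ∀ u, u ≠ v0 → 2 ≤ G.degree u) :
    2 * Nat.card G.Vert ≤ G.numEdges + 2 := by
  classical
  have := Fintype.ofFinite G.Vert
  have hsplit := Finset.add_sum_erase Finset.univ G.degree (Finset.mem_univ v0)
  rw [G.sum_degree, degree_eq_numEdges hbip] at hsplit
  have hrest := Finset.card_nsmul_le_sum (Finset.univ.erase v0) (fun u => G.degree u) 2
    fun u hu => hdeg u (Finset.ne_of_mem_erase hu)
  rw [Finset.card_erase_of_mem (Finset.mem_univ v0), Finset.card_univ,
    ← Nat.card_eq_fintype_card, smul_eq_mul] at hrest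
  have : Nonempty G.Vert := ⟨v0⟩
  have := Nat.card_pos (α := G.Vert)
  omega

end StarBipartite

end EmbGraph

theorem small_faces_bound_one_general
    (G : EmbGraph)
    (v0 : G.Vert)
    (hbip : ∀ d : G.D, G.vtx d = v0 ↔ G.vtx (G.α d) ≠ v0)
    (hdeg : ∀ u : G.Vert, u ≠ v0 → 2 ≤ G.degree u)
    (g : ℕ) (heuler : G.eulerChar = 2 - 2 * (g : ℤ))
    (k : ℕ) (hk : 2 ≤ k)
    (i : ℕ) (hi : i = Nat.card {f : G.Face // G.faceSize f < 2 * k}) :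
    (k : ℚ) / ((k : ℚ) - 1) - (2 * (k : ℚ) / ((k : ℚ) - 1)) * (g : ℚ)
      + (((k : ℚ) - 2) / ((k : ℚ) - 1)) * ((Nat.card G.Vert : ℚ) - 1) ≤ (i : ℚ) := by
  have hfaces := G.mul_numFaces_le (G.two_le_faceSize (EmbGraph.vtx_α_ne_vtx hbip)) k
  have hverts := EmbGraph.two_mul_card_vert_le hbip hdeg
  rw [← hi] at hfaces
  have hk1 : (0 : ℚ) < k - 1 := by
    have : (2 : ℚ) ≤ k := by exact_mod_cast hk
    linarith
  have hfacesℚ : (k : ℚ) * G.numFaces ≤ G.numEdges + (k - 1) * i := by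
    have := (Nat.cast_le (α := ℚ)).mpr hfaces
    push_cast [Nat.cast_sub (by omega : 1 ≤ k)] at this
    exact this
  have hvertsℚ : 2 * (Nat.card G.Vert : ℚ) ≤ G.numEdges + 2 := by exact_mod_cast hverts
  have heulerℚ : (Nat.card G.Vert : ℚ) - G.numEdges + G.numFaces = 2 - 2 * g := by
    rw [EmbGraph.eulerChar, EmbGraph.numVertices] at heuler
    exact_mod_cast heuler
  have hmain : (k : ℚ) - 2 * k * g + (k - 2) * (Nat.card G.Vert - 1) ≤ (k - 1) * i := by
    linear_combination hfacesℚ - k * heulerℚ + mul_le_mul_of_nonneg_left hvertsℚ hk1.le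
  calc _ = ((k : ℚ) - 2 * k * g + (k - 2) * (Nat.card G.Vert - 1)) / (k - 1) := by ring
    _ ≤ i := (div_le_iff₀' hk1).mpr hmain

/-- `G` connected bipartite multigraph of genus `g`, bipartition
classes `V₁ = {v₀}` and `V₂`, every vertex of `V₂` of degree at least `2`,
`k ≥ 2`, `i` the number of faces of size less than `2k`.  Then
`i ≥ k/(k-1) - (2k/(k-1))·g + ((k-2)/(k-1))·|V₂|`. -/
theorem small_faces_bound_one
    (G : EmbGraph) (hconn : G.Connected)
    (v0 : G.Vert)
    (hbip : ∀ d : G.D, G.vtx d = v0 ↔ G.vtx (G.α d) ≠ v0)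
    (hdeg : ∀ u : G.Vert, u ≠ v0 → 2 ≤ G.degree u)
    (g : ℕ) (heuler : G.eulerChar = 2 - 2 * (g : ℤ))
    (k : ℕ) (hk : 2 ≤ k)
    (i : ℕ) (hi : i = Nat.card {f : G.Face // G.faceSize f < 2 * k}) :
    (k : ℚ) / ((k : ℚ) - 1) - (2 * (k : ℚ) / ((k : ℚ) - 1)) * (g : ℚ)
      + (((k : ℚ) - 2) / ((k : ℚ) - 1)) * ((Nat.card G.Vert : ℚ) - 1) ≤ (i : ℚ) :=
  small_faces_bound_one_general G v0 hbip hdeg g heuler k hk i hi
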